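/- Let T be a game tree and let A = ⋃_{n∈ℕ} Aₙ where each Aₙ ⊆ ℕ^ℕ is a Gδ subset of Baire space. If player I has no winning strategy in G(A ∩ [T]; T), then player II has a winning strategy in G(A ∩ [T]; T). -/
import Mathlib


/-- `T ⊆ List ℕ` is a game tree: nonempty, closed under prefixes, and with no
terminal nodes. -/
def IsGameTree (T : Set (List ℕ)) : Prop :=
  T.Nonempty ∧ (∀ p ∈ T, ∀ q : List ℕ, q <+: p → q ∈ T) ∧
    ∀ p ∈ T, ∃ n : ℕ, p ++ [n] ∈ T

/-- The finite initial segment of `x : ℕ → ℕ` of length `k`, as a list. -/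
def seg (x : ℕ → ℕ) (k : ℕ) : List ℕ := (List.range k).map x

/-- The body `[T]` of a tree: all infinite plays whose finite initial segments
all lie in `T`. -/
def body (T : Set (List ℕ)) : Set (ℕ → ℕ) := {x | ∀ k, seg x k ∈ T}

/-- The localization `T_p` of `T` at a position `p`: all positions comparable
with `p`. -/
def restrict (T : Set (List ℕ)) (p : List ℕ) : Set (List ℕ) :=
  {q ∈ T | q <+: p ∨ p <+: q}

/-- `x` is a play consistent with `σ` used as a strategy for player I, who
moves at even stages. -/
def ConsWithI (σ : List ℕ → ℕ) (x : ℕ → ℕ) : Prop :=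
  ∀ k, Even k → x k = σ (seg x k)

/-- `x` is a play consistent with `σ` used as a strategy for player II, who
moves at odd stages. -/
def ConsWithII (σ : List ℕ → ℕ) (x : ℕ → ℕ) : Prop :=
  ∀ k, ¬ Even k → x k = σ (seg x k)

/-- `σ` is a winning strategy for player I in the game `G(A; T)`: it assigns a
legal move at every position of `T` where it is I's turn, and every play in
`[T]` consistent with it lies in `A`. -/
def WinStratI (T : Set (List ℕ)) (A : Set (ℕ → ℕ)) (σ : List ℕ → ℕ) : Prop :=
  (∀ p ∈ T, Even p.length → p ++ [σ p] ∈ T) ∧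
    ∀ x ∈ body T, ConsWithI σ x → x ∈ A

/-- `σ` is a winning strategy for player II in the game `G(A; T)`: it assigns a
legal move at every position of `T` where it is II's turn, and every play in
`[T]` consistent with it lies outside `A`. -/
def WinStratII (T : Set (List ℕ)) (A : Set (ℕ → ℕ)) (σ : List ℕ → ℕ) : Prop :=
  (∀ p ∈ T, ¬ Even p.length → p ++ [σ p] ∈ T) ∧
    ∀ x ∈ body T, ConsWithII σ x → x ∉ A

/-- `S` is a quasi-strategy for player II in the game tree `T`: a game
subtree which does not restrict I's moves. -/
def QuasiII (T S : Set (List ℕ)) : Prop :=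
  IsGameTree S ∧ S ⊆ T ∧
    ∀ p ∈ S, Even p.length → ∀ n : ℕ, p ++ [n] ∈ T → p ++ [n] ∈ S

/-- Player II's non-losing quasi-strategy `T'` for `G(A ∩ [T]; T)`. -/
def NonLosing (T : Set (List ℕ)) (A : Set (ℕ → ℕ)) : Set (List ℕ) :=
  {p ∈ T | ∀ q : List ℕ, q <+: p → Even q.length →
    ¬ ∃ σ, WinStratI (restrict T q) (A ∩ body (restrict T q)) σ}

/-- A position `p` of `T'` is good (w.r.t. `A` and `B ⊆ A`) if there is a
quasi-strategy `S` for II in `T'_p` with `[S] ∩ B = ∅` such that I has no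
winning strategy in `G(A ∩ [S]; S)`. -/
def Good (T' : Set (List ℕ)) (A B : Set (ℕ → ℕ)) (p : List ℕ) : Prop :=
  p ∈ T' ∧ ∃ S : Set (List ℕ), QuasiII (restrict T' p) S ∧ body S ∩ B = ∅ ∧
    ¬ ∃ σ, WinStratI S (A ∩ body S) σ


/-! ### Auxiliary development -/

open Classical

section Aux

lemma seg_length (x : ℕ → ℕ) (k : ℕ) : (seg x k).length = k := by simp [seg]

lemma seg_zero (x : ℕ → ℕ) : seg x 0 = [] := rfl

lemma seg_succ (x : ℕ → ℕ) (k : ℕ) : seg x (k+1) = seg x k ++ [x k] := by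
  simp [seg, List.range_succ]

lemma seg_getElem (x : ℕ → ℕ) {k i : ℕ} (h : i < k) :
    (seg x k)[i]'(by simpa [seg_length] using h) = x i := by
  simp [seg]

lemma seg_dropLast (x : ℕ → ℕ) (k : ℕ) : (seg x (k+1)).dropLast = seg x k := by
  rw [seg_succ]; exact List.dropLast_concat

lemma seg_take (x : ℕ → ℕ) (j k : ℕ) : (seg x k).take j = seg x (min j k) := by
  simp [seg, ← List.map_take, List.take_range]

lemma seg_prefix_seg (x : ℕ → ℕ) {j k : ℕ} (h : j ≤ k) : seg x j <+: seg x k := by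
  rw [List.prefix_iff_eq_take, seg_length, seg_take, min_eq_left h]

lemma prefix_seg {x : ℕ → ℕ} {q : List ℕ} {k : ℕ} (h : q <+: seg x k) :
    q = seg x q.length := by
  have h1 := List.prefix_iff_eq_take.mp h
  have h2 : q.length ≤ k := by have := h.length_le; simpa [seg_length] using this
  rw [seg_take, min_eq_left h2] at h1
  exact h1

lemma seg_eq_seg_iff {x y : ℕ → ℕ} {k : ℕ} : seg x k = seg y k ↔ ∀ i < k, x i = y i := by
  simp [seg, List.map_inj_left]

lemma mem_of_sec {U : Set (ℕ → ℕ)} {t : List ℕ}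
    (h : ∀ x : ℕ → ℕ, seg x t.length = t → x ∈ U) {x : ℕ → ℕ} {k : ℕ}
    (ht : t <+: seg x k) : x ∈ U := by
  exact h x (prefix_seg ht).symm

lemma prefix_snoc_of_lt {p q : List ℕ} (h : p <+: q) (hl : p.length < q.length) :
    p ++ [q[p.length]'hl] <+: q := by
  obtain ⟨r, rfl⟩ := h
  cases r with
  | nil => simp at hl
  | cons a r =>
      have : (p ++ a :: r)[p.length]'hl = a := by
        rw [List.getElem_append_right (le_refl _)]; simp
      rw [this]
      exact ⟨r, by simp⟩

lemma exists_sec_of_isOpen {U : Set (ℕ → ℕ)} (hU : IsOpen U) {x : ℕ → ℕ} (hx : x ∈ U) :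
    ∃ k, ∀ y : ℕ → ℕ, seg y k = seg x k → y ∈ U := by
  obtain ⟨I, u, hIu, hpi⟩ := isOpen_pi_iff.mp hU x hx
  refine ⟨I.sup id + 1, fun y hy => hpi ?_⟩
  intro a ha
  have hak : a < I.sup id + 1 := Nat.lt_succ_of_le (Finset.le_sup (f := id) ha)
  have : y a = x a := seg_eq_seg_iff.mp hy a hak
  rw [this]
  exact (hIu a ha).2

/-- `p` syntactically secures `U`: every play through `p` is in `U`. -/
def SecO (U : Set (ℕ → ℕ)) (p : List ℕ) : Prop :=
  ∀ x : ℕ → ℕ, seg x p.length = p → x ∈ U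

lemma secO_of_prefix {U : Set (ℕ → ℕ)} {t p : List ℕ} (h : SecO U t) (htp : t <+: p) :
    SecO U p := by
  intro x hx
  refine h x ?_
  have h2 : t <+: seg x p.length := by rw [hx]; exact htp
  exact (prefix_seg h2).symm

/-- Legality of a strategy for player I above position `p`. -/
def LegalI (S : Set (List ℕ)) (p : List ℕ) (σ : List ℕ → ℕ) : Prop :=
  ∀ q ∈ S, p <+: q → Even q.length → q ++ [σ q] ∈ S

/-- `x` follows `σ` (as player I) from stage `l` on. -/
def Follows (σ : List ℕ → ℕ) (l : ℕ) (x : ℕ → ℕ) : Prop :=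
  ∀ k, l ≤ k → Even k → x k = σ (seg x k)

/-- Player I has a winning strategy for payoff `C` from position `p` in tree `S`. -/
def WinFrom (S : Set (List ℕ)) (C : Set (ℕ → ℕ)) (p : List ℕ) : Prop :=
  ∃ σ, LegalI S p σ ∧
    ∀ x ∈ body S, seg x p.length = p → Follows σ p.length x → x ∈ C

/-- `S` is a game subtree of `R` localized at `p` which is a quasi-strategy for II. -/
def GoodSub (R S : Set (List ℕ)) (p : List ℕ) : Prop :=
  p ∈ S ∧ S ⊆ R ∧ (∀ q ∈ S, ∀ r : List ℕ, r <+: q → r ∈ S) ∧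
  (∀ q ∈ S, q <+: p ∨ p <+: q) ∧
  (∀ q ∈ S, p <+: q → ∃ n, q ++ [n] ∈ S) ∧
  (∀ q ∈ S, p <+: q → Even q.length → ∀ n, q ++ [n] ∈ R → q ++ [n] ∈ S)

noncomputable def extMove (S : Set (List ℕ)) (q : List ℕ) : ℕ :=
  if h : ∃ n, q ++ [n] ∈ S then h.choose else 0

lemma extMove_mem {S : Set (List ℕ)} {q : List ℕ} (h : ∃ n, q ++ [n] ∈ S) :
    q ++ [extMove S q] ∈ S := by
  rw [extMove, dif_pos h]; exact h.choose_spec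

lemma IsGameTree.prefix_mem {T : Set (List ℕ)} (hT : IsGameTree T) {q r : List ℕ}
    (hq : q ∈ T) (hr : r <+: q) : r ∈ T := hT.2.1 q hq r hr

lemma IsGameTree.extMove_mem {T : Set (List ℕ)} (hT : IsGameTree T) {q : List ℕ}
    (hq : q ∈ T) : q ++ [extMove T q] ∈ T := _root_.extMove_mem (hT.2.2 q hq)

lemma GoodSub.base_mem {R S : Set (List ℕ)} {p : List ℕ} (h : GoodSub R S p) : p ∈ S := h.1

lemma GoodSub.subset {R S : Set (List ℕ)} {p : List ℕ} (h : GoodSub R S p) : S ⊆ R := h.2.1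

lemma GoodSub.isGameTree {R S : Set (List ℕ)} {p : List ℕ} (h : GoodSub R S p) :
    IsGameTree S := by
  obtain ⟨hp, hsub, hpc, hcomp, hnt, hq⟩ := h
  refine ⟨⟨p, hp⟩, fun q hq' r hr => hpc q hq' r hr, fun q hq' => ?_⟩
  rcases hcomp q hq' with h1 | h1
  · rcases eq_or_lt_of_le h1.length_le with he | hl
    · have : q = p := h1.eq_of_length he
      subst this
      exact hnt q hq' (List.prefix_refl _)
    · exact ⟨_, hpc p hp _ (prefix_snoc_of_lt h1 hl)⟩
  · exact hnt q hq' h1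

lemma GoodSub.trans {R S S' : Set (List ℕ)} {p p' : List ℕ} (h1 : GoodSub R S p)
    (h2 : GoodSub S S' p') (hpp : p <+: p') : GoodSub R S' p' := by
  obtain ⟨hp1, hsub1, hpc1, hcomp1, hnt1, hq1⟩ := h1
  obtain ⟨hp2, hsub2, hpc2, hcomp2, hnt2, hq2⟩ := h2
  exact ⟨hp2, fun q hq' => hsub1 (hsub2 hq'), hpc2, hcomp2, hnt2,
    fun q hq' hpq he n hn => hq2 q hq' hpq he n (hq1 q (hsub2 hq') (hpp.trans hpq) he n hn)⟩

lemma body_mono {S S' : Set (List ℕ)} (h : S ⊆ S') : body S ⊆ body S' :=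
  fun _ hx k => h (hx k)

lemma body_mem_of_base {S : Set (List ℕ)}
    (hpc : ∀ q ∈ S, ∀ r : List ℕ, r <+: q → r ∈ S)
    {x : ℕ → ℕ} {l : ℕ} (hl : seg x l ∈ S) (hk : ∀ k, l ≤ k → seg x k ∈ S) :
    x ∈ body S := by
  intro k
  rcases le_or_gt l k with h | h
  · exact hk k h
  · exact hpc _ hl _ (seg_prefix_seg x h.le)

end Aux


section Steps

variable {S : Set (List ℕ)} {C : Set (ℕ → ℕ)}

/-- If I wins from a child (I to move at `p`), then I wins from `p`. -/
lemma winFrom_of_child (hS : IsGameTree S) {p : List ℕ}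
    (hev : Even p.length) {n : ℕ} (hn : p ++ [n] ∈ S)
    (hw : WinFrom S C (p ++ [n])) : WinFrom S C p := by
  obtain ⟨σ', hleg', hwin'⟩ := hw
  refine ⟨fun q => if q = p then n else if p ++ [n] <+: q then σ' q else extMove S q,
    ?_, ?_⟩
  · intro q hq hpq he
    by_cases h1 : q = p
    · subst h1; simpa using hn
    · by_cases h2 : p ++ [n] <+: q
      · have := hleg' q hq h2 he
        simpa [h1, h2] using this
      · simpa [h1, h2] using hS.extMove_mem hq
  · intro x hx hseg hfol
    have hxl : x p.length = n := by
      have h := hfol p.length (le_refl _) (by simpa [seg_length] using hev)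
      rw [hseg] at h
      simpa using h
    have hseg' : seg x (p ++ [n]).length = p ++ [n] := by
      simp only [List.length_append, List.length_singleton]
      rw [seg_succ, hseg, hxl]
    refine hwin' x hx hseg' ?_
    intro k hk hke
    simp only [List.length_append, List.length_singleton] at hk
    have hk' : p.length ≤ k := by omega
    rw [hfol k hk' hke]
    have hne : seg x k ≠ p := by
      intro hcon
      have := congrArg List.length hcon
      simp [seg_length] at this
      omega
    have hpre : p ++ [n] <+: seg x k := by
      rw [← hseg']
      simpa using seg_prefix_seg x hk
    simp [hne, hpre]

/-- If I wins from every child (II to move at `p`), then I wins from `p`. -/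
lemma winFrom_of_children (hS : IsGameTree S) {p : List ℕ}
    (hodd : ¬Even p.length)
    (hw : ∀ n, p ++ [n] ∈ S → WinFrom S C (p ++ [n])) : WinFrom S C p := by
  have hch : ∀ n, ∃ σ, p ++ [n] ∈ S → (LegalI S (p ++ [n]) σ ∧
      ∀ x ∈ body S, seg x (p ++ [n]).length = p ++ [n] →
        Follows σ (p ++ [n]).length x → x ∈ C) := by
    intro n
    by_cases h : p ++ [n] ∈ S
    · obtain ⟨σ, h1, h2⟩ := hw n h; exact ⟨σ, fun _ => ⟨h1, h2⟩⟩
    · exact ⟨fun _ => 0, fun hc => absurd hc h⟩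
  choose σc hσc using hch
  refine ⟨fun q => if h : p <+: q ∧ p.length < q.length then σc (q[p.length]'h.2) q
    else extMove S q, ?_, ?_⟩
  · intro q hq hpq he
    have hne : p ≠ q := by rintro rfl; exact hodd he
    have hl : p.length < q.length :=
      lt_of_le_of_ne hpq.length_le (fun hc => hne (hpq.eq_of_length hc))
    have hpn : p ++ [q[p.length]'hl] <+: q := prefix_snoc_of_lt hpq hl
    have hpnS : p ++ [q[p.length]'hl] ∈ S := hS.prefix_mem hq hpn
    have h2 := (hσc _ hpnS).1 q hq hpn he
    simp only []
    rw [dif_pos (⟨hpq, hl⟩ : p <+: q ∧ p.length < q.length)]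
    exact h2
  · intro x hx hseg hfol
    have hsegn : seg x (p.length + 1) = p ++ [x p.length] := by rw [seg_succ, hseg]
    have hpnS : p ++ [x p.length] ∈ S := by rw [← hsegn]; exact hx _
    refine (hσc _ hpnS).2 x hx (by simpa using hsegn) ?_
    intro k hk hke
    simp only [List.length_append, List.length_singleton] at hk
    have hk' : p.length ≤ k := by omega
    rw [hfol k hk' hke]
    have hl : p.length < (seg x k).length := by rw [seg_length]; omega
    have hpre : p <+: seg x k := by rw [← hseg]; exact seg_prefix_seg x hk'
    simp only []
    rw [dif_pos (⟨hpre, hl⟩ : p <+: seg x k ∧ p.length < (seg x k).length)]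
    have hg : (seg x k)[p.length]'hl = x p.length := seg_getElem x (by omega)
    rw [hg]

end Steps


section NonLosingSec

variable {S : Set (List ℕ)} {C : Set (ℕ → ℕ)}

lemma take_prefix_take {l : List ℕ} {m n : ℕ} (h : m ≤ n) : l.take m <+: l.take n :=
  List.prefix_take_iff.mpr ⟨List.take_prefix _ _, le_trans (by simp) h⟩

lemma prefix_dropLast_of_ne {r s : List ℕ} (h : r <+: s) (hne : r ≠ s) (hs : s ≠ []) :
    r <+: s.dropLast := by
  have h2 : r <+: s.dropLast ++ [s.getLast hs] := by rwa [List.dropLast_append_getLast]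
  rcases List.prefix_concat_iff.mp h2 with h3 | h3
  · rw [List.dropLast_append_getLast] at h3; exact absurd h3 hne
  · exact h3

/-- II's non-losing quasi-strategy: if I cannot win `C` from `p₀` in `S`, there is a
quasi-strategy for II from `p₀` in which I cannot win from any position. -/
lemma exists_nonlosing (hS : IsGameTree S) {p₀ : List ℕ} (hp : p₀ ∈ S)
    (hNG : ¬WinFrom S C p₀) :
    ∃ W, GoodSub S W p₀ ∧ (∀ q ∈ W, p₀ <+: q → ¬WinFrom S C q) ∧
      ∀ q ∈ W, p₀ <+: q → ¬WinFrom W C q := by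
  set W : Set (List ℕ) :=
    {q | q ∈ S ∧ (q <+: p₀ ∨ p₀ <+: q) ∧
      ∀ r, p₀ <+: r → r <+: q → ¬WinFrom S C r} with hWdef
  have hWS : ∀ q ∈ W, q ∈ S := fun q hq => hq.1
  have hWng : ∀ q ∈ W, p₀ <+: q → ¬WinFrom S C q :=
    fun q hq h => hq.2.2 q h (List.prefix_refl _)
  have hp₀W : p₀ ∈ W := by
    refine ⟨hp, Or.inr (List.prefix_refl _), fun r h1 h2 => ?_⟩
    have : r = p₀ := h2.eq_of_length (le_antisymm h2.length_le h1.length_le)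
    subst this; exact hNG
  have hWpc : ∀ q ∈ W, ∀ r : List ℕ, r <+: q → r ∈ W := by
    rintro q ⟨hqS, hqc, hqng⟩ r hr
    refine ⟨hS.prefix_mem hqS hr, ?_, fun r' h1 h2 => hqng r' h1 (h2.trans hr)⟩
    rcases hqc with h | h
    · exact Or.inl (hr.trans h)
    · exact List.prefix_or_prefix_of_prefix hr h
  have hWeven : ∀ q ∈ W, p₀ <+: q → Even q.length → ∀ n, q ++ [n] ∈ S → q ++ [n] ∈ W := by
    rintro q hqW hpq he n hn
    refine ⟨hn, Or.inr (hpq.trans ⟨[n], rfl⟩), fun r h1 h2 => ?_⟩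
    rcases List.prefix_concat_iff.mp h2 with h3 | h3
    · subst h3
      intro hw
      exact hWng q hqW hpq (winFrom_of_child hS he hn hw)
    · exact hqW.2.2 r h1 h3
  have hWodd : ∀ q ∈ W, p₀ <+: q → ¬Even q.length → ∃ n, q ++ [n] ∈ W := by
    rintro q hqW hpq ho
    by_contra hno
    push_neg at hno
    have hall : ∀ n, q ++ [n] ∈ S → WinFrom S C (q ++ [n]) := by
      intro n hn
      have := hno n
      by_contra hnw
      refine this ⟨hn, Or.inr (hpq.trans ⟨[n], rfl⟩), fun r h1 h2 => ?_⟩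
      rcases List.prefix_concat_iff.mp h2 with h3 | h3
      · subst h3; exact hnw
      · exact hqW.2.2 r h1 h3
    exact hWng q hqW hpq (winFrom_of_children hS ho hall)
  have hWnt : ∀ q ∈ W, p₀ <+: q → ∃ n, q ++ [n] ∈ W := by
    intro q hqW hpq
    by_cases he : Even q.length
    · obtain ⟨n, hn⟩ := hS.2.2 q (hWS q hqW)
      exact ⟨n, hWeven q hqW hpq he n hn⟩
    · exact hWodd q hqW hpq he
  have hGS : GoodSub S W p₀ :=
    ⟨hp₀W, fun q hq => hq.1, hWpc, fun q hq => hq.2.1, hWnt, hWeven⟩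
  -- exit positions are winning for I in S
  have hexit : ∀ s ∈ S, p₀ <+: s → s ∉ W → s ≠ [] → s.dropLast ∈ W → WinFrom S C s := by
    intro s hsS hps hsW hsne hdl
    by_contra hnw
    refine hsW ⟨hsS, Or.inr hps, fun r h1 h2 => ?_⟩
    by_cases hrs : r = s
    · subst hrs; exact hnw
    · exact hdl.2.2 r h1 (prefix_dropLast_of_ne h2 hrs hsne)
  refine ⟨W, hGS, hWng, ?_⟩
  -- transfer: no winning strategy in W either
  rintro q hqW hpq ⟨σ, hleg, hwin⟩
  refine hWng q hqW hpq ?_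
  -- the exit position below r
  classical
  set E : List ℕ → List ℕ := fun r => r.take (sInf {k | q <+: r.take k ∧ r.take k ∉ W})
    with hEdef
  have hEspec : ∀ r ∈ S, q <+: r → r ∉ W → WinFrom S C (E r) ∧ E r <+: r := by
    intro r hrS hqr hrW
    have hne : {k | q <+: r.take k ∧ r.take k ∉ W}.Nonempty :=
      ⟨r.length, by simpa [List.take_length] using ⟨hqr, hrW⟩⟩
    set k₀ := sInf {k | q <+: r.take k ∧ r.take k ∉ W} with hk₀
    obtain ⟨hqk, hkW⟩ := Nat.sInf_mem hne
    have hEr : E r = r.take k₀ := rfl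
    have hpre : E r <+: r := by rw [hEr]; exact List.take_prefix _ _
    have hErS : E r ∈ S := hS.prefix_mem hrS hpre
    have hqE : q <+: E r := hqk
    have hEW : E r ∉ W := hkW
    have hEq : E r ≠ q := fun hc => hEW (hc ▸ hqW)
    have hlen : q.length < (E r).length :=
      lt_of_le_of_ne hqE.length_le (fun hc => hEq (hqE.eq_of_length hc).symm)
    have hEne : E r ≠ [] := by
      intro hc; rw [hc] at hlen; simp at hlen
    have hk₀pos : 0 < k₀ := by
      rcases Nat.eq_zero_or_pos k₀ with h0 | h0
      · exfalso; rw [hEr, h0] at hEne; simp at hEne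
      · exact h0
    have hk₀len : k₀ ≤ r.length := by
      by_contra hgt
      push_neg at hgt
      have : r.take k₀ = r := List.take_of_length_le hgt.le
      have h2 : r.length ∈ {k | q <+: r.take k ∧ r.take k ∉ W} := by
        simpa [List.take_length] using ⟨hqr, hrW⟩
      have := Nat.sInf_le h2
      omega
    have hdl : (E r).dropLast = r.take (k₀ - 1) := by
      rw [hEr, List.dropLast_eq_take, List.length_take, List.take_take]
      congr 1
      omega
    have hdlW : (E r).dropLast ∈ W := by
      have hnotin : k₀ - 1 ∉ {k | q <+: r.take k ∧ r.take k ∉ W} :=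
        Nat.notMem_of_lt_sInf (by omega)
      have hqdl : q <+: r.take (k₀ - 1) := by
        have h1 : q = r.take q.length := List.prefix_iff_eq_take.mp hqr
        have h2 : q.length ≤ k₀ - 1 := by
          have : (E r).length = min k₀ r.length := by rw [hEr]; simp
          omega
        rw [h1]
        exact take_prefix_take h2
      rw [hdl]
      by_contra hc
      exact hnotin ⟨hqdl, hc⟩
    refine ⟨hexit (E r) hErS (hpq.trans hqE) hEW hEne hdlW, hpre⟩
  set σex : List ℕ → List ℕ → ℕ := fun s => if h : WinFrom S C s then h.choose else fun _ => 0
    with hσex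
  set τ : List ℕ → ℕ := fun r =>
    if r ∈ W then σ r else if q <+: r ∧ r ∉ W then σex (E r) r else extMove S r with hτ
  have hσexspec : ∀ s, WinFrom S C s → LegalI S s (σex s) ∧
      ∀ x ∈ body S, seg x s.length = s → Follows (σex s) s.length x → x ∈ C := by
    intro s hw
    have h1 : σex s = hw.choose := by rw [hσex]; simp [hw]
    rw [h1]
    exact hw.choose_spec
  refine ⟨τ, ?_, ?_⟩
  · -- legality in S
    intro r hrS hqr he
    by_cases hrW : r ∈ W
    · have h1 : τ r = σ r := by rw [hτ]; simp [hrW]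
      rw [h1]
      exact (hleg r hrW hqr he).1
    · have h1 : τ r = σex (E r) r := by rw [hτ]; simp [hrW, hqr]
      rw [h1]
      obtain ⟨hwE, hpre⟩ := hEspec r hrS hqr hrW
      exact (hσexspec _ hwE).1 r hrS hpre he
  · -- winning in S
    intro x hx hseg hfol
    by_cases hA : ∀ k, q.length ≤ k → seg x k ∈ W
    · -- the play stays in W: use σ
      have hxW : x ∈ body W := by
        refine body_mem_of_base hWpc (l := q.length) (by rw [hseg]; exact hqW) hA
      refine hwin x hxW hseg ?_
      intro k hk hke
      have h1 := hfol k hk hke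
      have h2 : seg x k ∈ W := hA k hk
      rw [h1, hτ]
      simp [h2]
    · -- the play exits W: use the exit strategy
      push_neg at hA
      obtain ⟨k₁, hk₁, hk₁W⟩ := hA
      set K := {k | q.length ≤ k ∧ seg x k ∉ W} with hK
      have hKne : K.Nonempty := ⟨k₁, hk₁, hk₁W⟩
      set k₀ := sInf K with hk₀
      obtain ⟨hk₀q, hk₀W⟩ := Nat.sInf_mem hKne
      have hnotW : ∀ k, k₀ ≤ k → seg x k ∉ W := by
        intro k hk hkW
        exact hk₀W (hWpc _ hkW _ (seg_prefix_seg x hk))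
      have hqpre : ∀ k, q.length ≤ k → q <+: seg x k := by
        intro k hk
        rw [← hseg]; exact seg_prefix_seg x hk
      -- E is constantly seg x k₀ along the play
      have hEconst : ∀ k, k₀ ≤ k → E (seg x k) = seg x k₀ := by
        intro k hk
        have h1 : ∀ j, (q <+: (seg x k).take j ∧ (seg x k).take j ∉ W) ↔
            (q <+: seg x (min j k) ∧ seg x (min j k) ∉ W) := by
          intro j; rw [seg_take]
        have h2 : sInf {j | q <+: (seg x k).take j ∧ (seg x k).take j ∉ W} = k₀ := by
          have hmem : k₀ ∈ {j | q <+: (seg x k).take j ∧ (seg x k).take j ∉ W} := by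
            rw [Set.mem_setOf_eq, h1, min_eq_left hk]
            exact ⟨hqpre _ hk₀q, hk₀W⟩
          refine le_antisymm (Nat.sInf_le hmem) ?_
          by_contra hlt
          push_neg at hlt
          obtain ⟨hj1, hj2⟩ := Nat.sInf_mem ⟨k₀, hmem⟩
          set j₁ := sInf {j | q <+: (seg x k).take j ∧ (seg x k).take j ∉ W} with hj₁
          have ht : (seg x k).take j₁ = seg x j₁ := by
            rw [seg_take, min_eq_left (by omega)]
          rw [ht] at hj1 hj2
          have hlen : q.length ≤ j₁ := by
            have := hj1.length_le; rwa [seg_length] at this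
          have h3 : sInf K ≤ j₁ := Nat.sInf_le ⟨hlen, hj2⟩
          omega
        rw [hEdef]
        simp only []
        rw [h2, seg_take, min_eq_left hk]
      obtain ⟨hwE, _⟩ := hEspec (seg x k₀) (hx k₀) (hqpre _ hk₀q) hk₀W
      rw [hEconst k₀ (le_refl _)] at hwE
      refine (hσexspec _ hwE).2 x hx (by rw [seg_length]) ?_
      intro k hk hke
      rw [seg_length] at hk
      have h1 := hfol k (le_trans hk₀q hk) hke
      rw [h1, hτ]
      simp only []
      rw [if_neg (hnotW k hk), if_pos ⟨hqpre _ (le_trans hk₀q hk), hnotW k hk⟩,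
        hEconst k hk]


end NonLosingSec

section Forcing

/-- `p` is a good position: II has a quasi-strategy from `p` avoiding `B` in which
I cannot win the `A`-game. -/
def GoodAt (R : Set (List ℕ)) (A B : Set (ℕ → ℕ)) (p : List ℕ) : Prop :=
  p ∈ R ∧ ∃ S, GoodSub R S p ∧ body S ∩ B = ∅ ∧ ¬WinFrom S A p

def TargSet (R : Set (List ℕ)) (A B V : Set (ℕ → ℕ)) (r : List ℕ) : Set (List ℕ) :=
  {s | s ∈ R ∧ r <+: s ∧ ¬GoodAt R A B s ∧ SecO V s}

/-- Davis's key forcing lemma: from a bad position (no prefix of which secures `V`),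
player I can win the game `A ∪ (reach a bad position securing V)`. -/
lemma forcing {R : Set (List ℕ)} {A B V : Set (ℕ → ℕ)} (hR : IsGameTree R)
    (hV : IsOpen V) (hBV : B ⊆ V) {p : List ℕ} (hpR : p ∈ R)
    (hbad : ¬GoodAt R A B p) (hnsec : ∀ t, t <+: p → ¬SecO V t) :
    WinFrom R (A ∪ {x | ∃ k, p.length < k ∧ seg x k ∈ TargSet R A B V p}) p := by
  by_contra hnw
  set C := A ∪ {x | ∃ k, p.length < k ∧ seg x k ∈ TargSet R A B V p} with hC
  obtain ⟨W, hGW, hWng, hWWng⟩ := exists_nonlosing hR hpR hnw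
  obtain ⟨hpW, hWR, hWpc, hWcomp, hWnt, hWq⟩ := hGW
  have hWtree : IsGameTree W := GoodSub.isGameTree ⟨hpW, hWR, hWpc, hWcomp, hWnt, hWq⟩
  -- positions of `TargSet` are trivially winning for I in the C-game
  have hTargWin : ∀ s, s ∈ TargSet R A B V p → WinFrom R C s := by
    rintro s ⟨hsR, hps, hsbad, hsec⟩
    refine ⟨fun q => extMove R q, fun q hq _ _ => hR.extMove_mem hq, ?_⟩
    intro x hx hseg _
    right
    have hsp : s ≠ p := fun hc => hnsec p (List.prefix_refl _) (hc ▸ hsec)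
    have hlen : p.length < s.length :=
      lt_of_le_of_ne hps.length_le (fun hc => hsp ((hps.eq_of_length hc).symm))
    exact ⟨s.length, hlen, by rw [hseg]; exact ⟨hsR, hps, hsbad, hsec⟩⟩
  -- hence positions of W above p which secure V are good
  have hWGood : ∀ s ∈ W, p <+: s → SecO V s → GoodAt R A B s := by
    intro s hsW hps hsec
    by_contra hg
    exact hWng s hsW hps (hTargWin s ⟨hWR hsW, hps, hg, hsec⟩)
  -- minimal securing positions, and the glued tree
  set SwMin : Set (List ℕ) :=
    {s | s ∈ W ∧ p <+: s ∧ SecO V s ∧ ∀ t, p <+: t → t <+: s → t ≠ s → ¬SecO V t}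
    with hSw
  have hGw0 : ∀ s, ∃ G, s ∈ SwMin → GoodSub R G s ∧ body G ∩ B = ∅ ∧ ¬WinFrom G A s := by
    intro s
    by_cases h : s ∈ SwMin
    · obtain ⟨hsW, hps, hsec, _⟩ := h
      obtain ⟨_, G, hG⟩ := hWGood s hsW hps hsec
      exact ⟨G, fun _ => hG⟩
    · exact ⟨∅, fun hc => absurd hc h⟩
  choose Gw hGw using hGw0
  set Pre : Set (List ℕ) :=
    {s | s ∈ W ∧ ∀ t, p <+: t → t <+: s → t ≠ s → ¬SecO V t} with hPre
  set Post : Set (List ℕ) :=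
    {r | ∃ s, s ∈ SwMin ∧ s <+: r ∧ s ≠ r ∧ r ∈ Gw s} with hPost
  set S' := Pre ∪ Post with hS'
  have hnsecp : ¬SecO V p := hnsec p (List.prefix_refl _)
  have hSwPre : ∀ s ∈ SwMin, s ∈ Pre := fun s hs => ⟨hs.1, hs.2.2.2⟩
  have hSwuniq : ∀ s₁ s₂ r : List ℕ, s₁ ∈ SwMin → s₂ ∈ SwMin → s₁ <+: r → s₂ <+: r →
      s₁ = s₂ := by
    intro s₁ s₂ r h1 h2 hr1 hr2
    rcases List.prefix_or_prefix_of_prefix hr1 hr2 with h | h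
    · by_contra hne
      exact h2.2.2.2 s₁ h1.2.1 h hne h1.2.2.1
    · by_contra hne
      exact h1.2.2.2 s₂ h2.2.1 h (fun hc => hne hc.symm) h2.2.2.1
  have hPrePc : ∀ r ∈ Pre, ∀ r' : List ℕ, r' <+: r → r' ∈ Pre := by
    rintro r ⟨hrW, hrc⟩ r' hr'
    refine ⟨hWpc r hrW r' hr', fun t h1 h2 h3 => ?_⟩
    by_cases h4 : t = r
    · exfalso
      subst h4
      exact h3 (hr'.eq_of_length (le_antisymm hr'.length_le h2.length_le)).symm
    · exact hrc t h1 (h2.trans hr') h4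
  have hPreDisj : ∀ r ∈ Post, r ∉ Pre := by
    rintro r ⟨s, hsSw, hsr, hne, _⟩ hrPre
    exact hrPre.2 s hsSw.2.1 hsr hne hsSw.2.2.1
  have hpPre : p ∈ Pre := by
    refine ⟨hpW, fun t h1 h2 h3 => ?_⟩
    have : t = p := h2.eq_of_length (le_antisymm h2.length_le h1.length_le)
    exact absurd this h3
  have hPreSw : ∀ r ∈ Pre, p <+: r → SecO V r → r ∈ SwMin := by
    rintro r ⟨hrW, hrc⟩ hpr hsec
    exact ⟨hrW, hpr, hsec, hrc⟩
  have hPreChild : ∀ r ∈ Pre, ¬SecO V r → ∀ n, r ++ [n] ∈ W → r ++ [n] ∈ Pre := by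
    rintro r ⟨hrW, hrc⟩ hns n hn
    refine ⟨hn, fun t h1 h2 h3 => ?_⟩
    rcases List.prefix_concat_iff.mp h2 with h4 | h4
    · exact absurd h4 h3
    · by_cases h5 : t = r
      · subst h5; exact hns
      · exact hrc t h1 h4 h5
  have hGwmem : ∀ s ∈ SwMin, s ∈ Gw s := fun s hs => ((hGw s hs).1).1
  -- S' is a good subtree of R at p
  have hGS' : GoodSub R S' p := by
    refine ⟨Or.inl hpPre, ?_, ?_, ?_, ?_, ?_⟩
    · rintro r (hr | ⟨s, hsSw, _, _, hrG⟩)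
      · exact hWR hr.1
      · exact ((hGw s hsSw).1).2.1 hrG
    · rintro r (hr | ⟨s, hsSw, hsr, hne, hrG⟩) r' hr'
      · exact Or.inl (hPrePc r hr r' hr')
      · rcases List.prefix_or_prefix_of_prefix hr' hsr with h | h
        · exact Or.inl (hPrePc s (hSwPre s hsSw) r' h)
        · by_cases h5 : r' = s
          · exact Or.inl (h5 ▸ hSwPre s hsSw)
          · exact Or.inr ⟨s, hsSw, h, fun hc => h5 hc.symm,
              ((hGw s hsSw).1).2.2.1 r hrG r' hr'⟩
    · rintro r (hr | ⟨s, hsSw, hsr, hne, hrG⟩)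
      · rcases hWcomp r hr.1 with h | h
        · exact Or.inl h
        · exact Or.inr h
      · exact Or.inr (hsSw.2.1.trans hsr)
    · rintro r (hr | ⟨s, hsSw, hsr, hne, hrG⟩) hpr
      · by_cases hsec : SecO V r
        · have hrSw : r ∈ SwMin := hPreSw r hr hpr hsec
          obtain ⟨n, hn⟩ := ((hGw r hrSw).1).2.2.2.2.1 r (hGwmem r hrSw) (List.prefix_refl _)
          refine ⟨n, Or.inr ⟨r, hrSw, ⟨[n], rfl⟩, ?_, hn⟩⟩
          intro hc
          have := congrArg List.length hc
          simp at this
        · obtain ⟨n, hn⟩ := hWnt r hr.1 hpr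
          exact ⟨n, Or.inl (hPreChild r hr hsec n hn)⟩
      · obtain ⟨n, hn⟩ := ((hGw s hsSw).1).2.2.2.2.1 r hrG hsr
        refine ⟨n, Or.inr ⟨s, hsSw, hsr.trans ⟨[n], rfl⟩, ?_, hn⟩⟩
        intro hc
        have h7 := congrArg List.length hc
        have h8 := hsr.length_le
        simp at h7
        omega
    · rintro r (hr | ⟨s, hsSw, hsr, hne, hrG⟩) hpr he n hn
      · by_cases hsec : SecO V r
        · have hrSw : r ∈ SwMin := hPreSw r hr hpr hsec
          have := ((hGw r hrSw).1).2.2.2.2.2 r (hGwmem r hrSw) (List.prefix_refl _) he n hn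
          refine Or.inr ⟨r, hrSw, ⟨[n], rfl⟩, ?_, this⟩
          intro hc
          have := congrArg List.length hc
          simp at this
        · have := hWq r hr.1 hpr he n hn
          exact Or.inl (hPreChild r hr hsec n this)
      · have := ((hGw s hsSw).1).2.2.2.2.2 r hrG hsr he n hn
        refine Or.inr ⟨s, hsSw, hsr.trans ⟨[n], rfl⟩, ?_, this⟩
        intro hc
        have h7 := congrArg List.length hc
        have h8 := hsr.length_le
        simp at h7
        omega
  -- every play in S' passes through p
  have hxp : ∀ x ∈ body S', seg x p.length = p := by
    intro x hxb
    have h1 := hxb p.length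
    have hc : seg x p.length <+: p ∨ p <+: seg x p.length := by
      rcases h1 with h | h
      · exact hWcomp _ h.1
      · obtain ⟨s, hsSw, hsr, _, _⟩ := h
        exact Or.inr (hsSw.2.1.trans hsr)
    rcases hc with h | h
    · exact h.eq_of_length (by rw [seg_length])
    · exact (h.eq_of_length (by rw [seg_length])).symm
  -- [S'] avoids B
  have hbodyB : body S' ∩ B = ∅ := by
    rw [Set.eq_empty_iff_forall_notMem]
    rintro x ⟨hxb, hxB⟩
    by_cases hpost : ∃ k, seg x k ∈ Post
    · obtain ⟨k, s, hsSw, hsr, hne, hG⟩ := hpost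
      have hseg_s : seg x s.length = s := (prefix_seg hsr).symm
      have hxG : x ∈ body (Gw s) := by
        intro j
        rcases le_or_gt j s.length with hj | hj
        · refine ((hGw s hsSw).1).2.2.1 s (hGwmem s hsSw) _ ?_
          rw [← hseg_s]; exact seg_prefix_seg x hj
        · have hspre : s <+: seg x j := by
            rw [← hseg_s]; exact seg_prefix_seg x hj.le
          have hne2 : s ≠ seg x j := by
            intro hc; have := congrArg List.length hc
            rw [seg_length] at this; omega
          rcases hxb j with h | h
          · exact absurd hsSw.2.2.1 (h.2 s hsSw.2.1 hspre hne2)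
          · obtain ⟨s₂, hs₂, hs₂r, _, hG₂⟩ := h
            have he2 : s₂ = s := hSwuniq s₂ s (seg x j) hs₂ hsSw hs₂r hspre
            rwa [he2] at hG₂
      have h2 := (hGw s hsSw).2.1
      rw [Set.eq_empty_iff_forall_notMem] at h2
      exact h2 x ⟨hxG, hxB⟩
    · push_neg at hpost
      have hallPre : ∀ k, seg x k ∈ Pre := by
        intro k
        rcases hxb k with h | h
        · exact h
        · exact absurd h (hpost k)
      obtain ⟨k, hk⟩ := exists_sec_of_isOpen hV (hBV hxB)
      have hsec : SecO V (seg x k) := by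
        intro y hy; exact hk y (by rwa [seg_length] at hy)
      rcases le_or_gt k p.length with hkp | hkp
      · refine hnsec (seg x k) ?_ hsec
        rw [← hxp x hxb]; exact seg_prefix_seg x hkp
      · refine (hallPre (k+1)).2 (seg x k) ?_ (seg_prefix_seg x (Nat.le_succ _)) ?_ hsec
        · rw [← hxp x hxb]; exact seg_prefix_seg x hkp.le
        · intro hc; have := congrArg List.length hc; simp [seg_length] at this
  -- I has no winning strategy for A in S'
  have hnwS' : ¬WinFrom S' A p := by
    rintro ⟨σ, hleg, hwin⟩
    by_cases hcase : ∃ s ∈ SwMin, ∀ (k : ℕ) (hk : k < s.length),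
        p.length ≤ k → Even k → s[k]'hk = σ (s.take k)
    · -- a consistent switch point: σ would win in its witness tree
      obtain ⟨s, hsSw, hsCons⟩ := hcase
      obtain ⟨hGsub, hGbody, hGnw⟩ := hGw s hsSw
      have hsS'mem : ∀ r ∈ Gw s, s <+: r → r ∈ S' := by
        intro r hrG hsr
        by_cases h5 : r = s
        · exact Or.inl (h5 ▸ hSwPre s hsSw)
        · exact Or.inr ⟨s, hsSw, hsr, fun hc => h5 hc.symm, hrG⟩
      refine hGnw ⟨σ, ?_, ?_⟩
      · intro r hrG hsr he
        have h6 := hleg r (hsS'mem r hrG hsr) (hsSw.2.1.trans hsr) he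
        have hsne : s ≠ r ++ [σ r] := by
          intro hc
          have h7 := congrArg List.length hc
          have h8 := hsr.length_le
          simp at h7; omega
        rcases h6 with h | h
        · exact absurd hsSw.2.2.1
            (h.2 s hsSw.2.1 (hsr.trans ⟨[σ r], rfl⟩) hsne)
        · obtain ⟨s₂, hs₂, hs₂r, _, hG₂⟩ := h
          have he2 : s₂ = s :=
            hSwuniq s₂ s (r ++ [σ r]) hs₂ hsSw hs₂r (hsr.trans ⟨[σ r], rfl⟩)
          rwa [he2] at hG₂
      · intro x hxb hseg hfol
        have hxS' : x ∈ body S' := by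
          intro j
          rcases le_or_gt j s.length with hj | hj
          · refine Or.inl (hPrePc s (hSwPre s hsSw) _ ?_)
            rw [← hseg]; exact seg_prefix_seg x hj
          · have hspre : s <+: seg x j := by
              rw [← hseg]; exact seg_prefix_seg x hj.le
            refine Or.inr ⟨s, hsSw, hspre, ?_, hxb j⟩
            intro hc; have := congrArg List.length hc
            rw [seg_length] at this; omega
        have hfolp : Follows σ p.length x := by
          intro k hk hke
          rcases lt_or_ge k s.length with hks | hks
          · have h8 := hsCons k hks hk hke
            have h9 : s[k]'hks = x k := by
              have : (seg x s.length)[k]'(by rw [seg_length]; exact hks) = x k :=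
                seg_getElem x (by exact hks)
              rw [← this]
              congr 1
              exact hseg.symm
            have h10 : s.take k = seg x k := by
              rw [← hseg, seg_take, min_eq_left hks.le]
            rw [← h9, h8, h10]
          · exact hfol k hks hke
        exact hwin x hxS' (hxp x hxS') hfolp
    · -- no consistent switch point: σ would win the C-game in W
      push_neg at hcase
      refine hWWng p hpW (List.prefix_refl _)
        ⟨fun r => if r ∈ Pre ∧ ¬SecO V r then σ r else extMove W r, ?_, ?_⟩
      · intro r hrW hpr he
        simp only []
        by_cases hcond : r ∈ Pre ∧ ¬SecO V r
        · rw [if_pos hcond]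
          have h6 := hleg r (Or.inl hcond.1) hpr he
          rcases h6 with h | h
          · exact h.1
          · exfalso
            obtain ⟨s₂, hs₂, hs₂r, hne₂, _⟩ := h
            have h7 : s₂ <+: r := by
              rcases List.prefix_concat_iff.mp hs₂r with h8 | h8
              · exact absurd h8 hne₂
              · exact h8
            by_cases h9 : s₂ = r
            · exact hcond.2 (h9 ▸ hs₂.2.2.1)
            · exact hcond.1.2 s₂ hs₂.2.1 h7 h9 hs₂.2.2.1
        · rw [if_neg hcond]
          exact hWtree.extMove_mem hrW
      · intro x hxb hseg hfol
        have hPreAll : ∀ k, seg x k ∈ Pre ∧ ¬SecO V (seg x k) := by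
          intro k
          induction k using Nat.strong_induction_on with
          | _ k IH =>
            have hPrek : seg x k ∈ Pre := by
              refine ⟨hxb k, fun t h1 h2 h3 => ?_⟩
              have ht : t = seg x t.length := prefix_seg h2
              have hlt : t.length < k := by
                have h4 := h2.length_le
                rw [seg_length] at h4
                rcases lt_or_eq_of_le h4 with h5 | h5
                · exact h5
                · exfalso
                  exact h3 (h2.eq_of_length (by rw [seg_length, h5]))
              rw [ht]
              exact (IH t.length hlt).2
            refine ⟨hPrek, ?_⟩
            intro hsec
            rcases le_or_gt k p.length with hkp | hkp
            · refine hnsec (seg x k) ?_ hsec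
              rw [← hseg]; exact seg_prefix_seg x hkp
            · have hpk : p <+: seg x k := by
                rw [← hseg]; exact seg_prefix_seg x hkp.le
              have hkSw : seg x k ∈ SwMin := hPreSw _ hPrek hpk hsec
              obtain ⟨k', hk', hpk', hke', hne'⟩ := hcase (seg x k) hkSw
              apply hne'
              have hk'2 : k' < k := by rwa [seg_length] at hk'
              have h9 : (seg x k)[k']'hk' = x k' := seg_getElem x hk'2
              have h10 : (seg x k).take k' = seg x k' := by
                rw [seg_take, min_eq_left hk'2.le]
              rw [h9, h10]
              have h11 := hfol k' hpk' hke'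
              rw [h11]
              simp only []
              rw [if_pos ⟨(IH k' hk'2).1, (IH k' hk'2).2⟩]
        have hxS' : x ∈ body S' := fun k => Or.inl (hPreAll k).1
        have hfolp : Follows σ p.length x := by
          intro k hk hke
          rw [hfol k hk hke]
          simp only []
          rw [if_pos ⟨(hPreAll k).1, (hPreAll k).2⟩]
        exact Or.inl (hwin x hxS' (hxp x hxS') hfolp)
  exact hbad ⟨hpR, S', hGS', hbodyB, hnwS'⟩

end Forcing


section StateMachine

/-- Stabilisation: find the least index `≥ j` of an open set not yet secured by a
prefix of `r` (`none` if every index is secured). -/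
noncomputable def stab (U : ℕ → Set (ℕ → ℕ)) (r : List ℕ) (j : ℕ) : List ℕ × Option ℕ :=
  if ∃ i, j ≤ i ∧ ∀ t, t <+: r → ¬SecO (U i) t then
    (r, some (sInf {i | j ≤ i ∧ ∀ t, t <+: r → ¬SecO (U i) t}))
  else (r, none)

lemma stab_fst (U : ℕ → Set (ℕ → ℕ)) (r : List ℕ) (j : ℕ) : (stab U r j).1 = r := by
  unfold stab
  split <;> rfl

lemma stab_some {U : ℕ → Set (ℕ → ℕ)} {r : List ℕ} {j i : ℕ}
    (h : (stab U r j).2 = some i) :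
    j ≤ i ∧ (∀ t, t <+: r → ¬SecO (U i) t) ∧
      ∀ i', j ≤ i' → i' < i → ∃ t, t <+: r ∧ SecO (U i') t := by
  unfold stab at h
  split at h
  case isTrue hex =>
    simp only [Option.some.injEq] at h
    subst h
    have h1 := Nat.sInf_mem hex
    refine ⟨h1.1, h1.2, fun i' h2 h3 => ?_⟩
    have h4 := Nat.notMem_of_lt_sInf h3
    rw [Set.mem_setOf_eq] at h4
    push_neg at h4
    exact h4 h2
  case isFalse hex => simp at h

lemma stab_none {U : ℕ → Set (ℕ → ℕ)} {r : List ℕ} {j : ℕ}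
    (h : (stab U r j).2 = none) :
    ∀ i, j ≤ i → ∃ t, t <+: r ∧ SecO (U i) t := by
  unfold stab at h
  split at h
  case isTrue hex => simp at h
  case isFalse hex =>
    push_neg at hex
    exact hex

noncomputable def sttStep (R : Set (List ℕ)) (A B : Set (ℕ → ℕ)) (U : ℕ → Set (ℕ → ℕ))
    (s : List ℕ × Option ℕ) (q : List ℕ) : List ℕ × Option ℕ :=
  match s with
  | (r, none) => (r, none)
  | (r, some j) =>
      if q ∈ TargSet R A B (U j) r then stab U q (j+1) else (r, some j)

lemma sttStep_none {R : Set (List ℕ)} {A B : Set (ℕ → ℕ)} {U : ℕ → Set (ℕ → ℕ)}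
    {s : List ℕ × Option ℕ} (h : s.2 = none) (q : List ℕ) :
    sttStep R A B U s q = s := by
  obtain ⟨r, o⟩ := s
  simp only at h
  subst h
  rfl

lemma sttStep_some_pos {R : Set (List ℕ)} {A B : Set (ℕ → ℕ)} {U : ℕ → Set (ℕ → ℕ)}
    {s : List ℕ × Option ℕ} {j : ℕ} (h : s.2 = some j) {q : List ℕ}
    (hq : q ∈ TargSet R A B (U j) s.1) :
    sttStep R A B U s q = stab U q (j+1) := by
  obtain ⟨r, o⟩ := s
  simp only at h
  subst h
  simp only [sttStep, if_pos hq]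

lemma sttStep_some_neg {R : Set (List ℕ)} {A B : Set (ℕ → ℕ)} {U : ℕ → Set (ℕ → ℕ)}
    {s : List ℕ × Option ℕ} {j : ℕ} (h : s.2 = some j) {q : List ℕ}
    (hq : q ∉ TargSet R A B (U j) s.1) :
    sttStep R A B U s q = s := by
  obtain ⟨r, o⟩ := s
  simp only at h
  subst h
  simp only [sttStep, if_neg hq]

/-- The milestone/counter state machine read along a position. -/
noncomputable def stt (R : Set (List ℕ)) (A B : Set (ℕ → ℕ)) (U : ℕ → Set (ℕ → ℕ))
    (p₀ : List ℕ) : ℕ → List ℕ → List ℕ × Option ℕ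
  | 0, _ => stab U p₀ 0
  | (k+1), q =>
      if k + 1 ≤ p₀.length then stab U p₀ 0
      else sttStep R A B U (stt R A B U p₀ k q.dropLast) q

lemma stt_le {R : Set (List ℕ)} {A B : Set (ℕ → ℕ)} {U : ℕ → Set (ℕ → ℕ)}
    {p₀ : List ℕ} {k : ℕ} (h : k ≤ p₀.length) (q : List ℕ) :
    stt R A B U p₀ k q = stab U p₀ 0 := by
  cases k with
  | zero => rfl
  | succ k => rw [stt, if_pos h]

lemma stt_succ {R : Set (List ℕ)} {A B : Set (ℕ → ℕ)} {U : ℕ → Set (ℕ → ℕ)}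
    {p₀ : List ℕ} {k : ℕ} (h : p₀.length < k + 1) (q : List ℕ) :
    stt R A B U p₀ (k+1) q = sttStep R A B U (stt R A B U p₀ k q.dropLast) q := by
  rw [stt, if_neg (by omega)]

end StateMachine


section Lemma31

/-- Lemma 31: if I cannot win `G(A;R)` from `p₀` and `B ⊆ A` is Gδ, then `p₀` is good. -/
lemma lemma31 {R : Set (List ℕ)} {A B : Set (ℕ → ℕ)} (hR : IsGameTree R)
    {U : ℕ → Set (ℕ → ℕ)} (hU : ∀ m, IsOpen (U m)) (hBU : B = ⋂ m, U m) (hBA : B ⊆ A)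
    {p₀ : List ℕ} (hp₀ : p₀ ∈ R) (hNG : ¬WinFrom R A p₀) : GoodAt R A B p₀ := by
  by_contra hbad
  apply hNG
  have hBV : ∀ m, B ⊆ U m := fun m => by rw [hBU]; exact Set.iInter_subset _ m
  have hsig0 : ∀ (r : List ℕ) (j : ℕ), ∃ σ : List ℕ → ℕ,
      (r ∈ R ∧ ¬GoodAt R A B r ∧ (∀ t, t <+: r → ¬SecO (U j) t)) →
      (LegalI R r σ ∧ ∀ x ∈ body R, seg x r.length = r → Follows σ r.length x →
        x ∈ A ∪ {y | ∃ k, r.length < k ∧ seg y k ∈ TargSet R A B (U j) r}) := by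
    intro r j
    by_cases h : r ∈ R ∧ ¬GoodAt R A B r ∧ (∀ t, t <+: r → ¬SecO (U j) t)
    · obtain ⟨σ, h1, h2⟩ := forcing hR (hU j) (hBV j) h.1 h.2.1 h.2.2
      exact ⟨σ, fun _ => ⟨h1, h2⟩⟩
    · exact ⟨fun _ => 0, fun hc => absurd hc h⟩
  choose sig hsig using hsig0
  set M : List ℕ → List ℕ × Option ℕ := fun q => stt R A B U p₀ q.length q with hM
  set τ : List ℕ → ℕ := fun q =>
    ((M q).2).elim (extMove R q) (fun j => sig (M q).1 j q) with hτ
  have hτnone : ∀ q, (M q).2 = none → τ q = extMove R q := by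
    intro q h; rw [hτ]; simp [h]
  have hτsome : ∀ q j, (M q).2 = some j → τ q = sig (M q).1 j q := by
    intro q j h; rw [hτ]; simp [h]
  -- the invariant of the state machine
  have hInvN : ∀ (n : ℕ) (q : List ℕ), q.length = n → q ∈ R → p₀ <+: q →
      (p₀ <+: (M q).1 ∧ (M q).1 <+: q ∧ ¬GoodAt R A B (M q).1) ∧
      (∀ j, (M q).2 = some j → (∀ t, t <+: (M q).1 → ¬SecO (U j) t) ∧
        ∀ i, i < j → ∃ t, t <+: (M q).1 ∧ SecO (U i) t) ∧
      ((M q).2 = none → ∀ i, ∃ t, t <+: (M q).1 ∧ SecO (U i) t) := by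
    intro n
    induction n using Nat.strong_induction_on with
    | _ n IH =>
      intro q hlen hqR hpq
      rcases le_or_gt q.length p₀.length with hle | hlt
      · -- base case: q = p₀
        have hq : p₀ = q := hpq.eq_of_length (le_antisymm hpq.length_le hle)
        subst hq
        have hMq : M p₀ = stab U p₀ 0 := stt_le (le_refl _) p₀
        constructor
        · rw [hMq, stab_fst]
          exact ⟨List.prefix_refl _, List.prefix_refl _, hbad⟩
        constructor
        · intro j hj
          rw [hMq] at hj ⊢
          rw [stab_fst]
          obtain ⟨_, h2, h3⟩ := stab_some hj
          exact ⟨h2, fun i hi => h3 i (Nat.zero_le _) hi⟩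
        · intro hj
          rw [hMq] at hj ⊢
          rw [stab_fst]
          exact fun i => stab_none hj i (Nat.zero_le _)
      · -- inductive step
        rcases n with _ | k
        · omega
        have hql : q.length = k + 1 := hlen
        have hqne : q ≠ [] := by intro hc; rw [hc] at hql; simp at hql
        have hdlen : q.dropLast.length = k := by rw [List.length_dropLast, hql]; omega
        have hdR : q.dropLast ∈ R := hR.prefix_mem hqR (List.dropLast_prefix q)
        have hpdl : p₀ <+: q.dropLast := by
          refine prefix_dropLast_of_ne hpq ?_ hqne
          intro hc
          rw [hc] at hlt
          omega
        have hMq : M q = sttStep R A B U (M q.dropLast) q := by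
          rw [hM]
          simp only []
          rw [hql, hdlen, stt_succ (by omega) q]
        have hIH := IH k (by omega) q.dropLast hdlen hdR hpdl
        rcases hs : (M q.dropLast).2 with _ | j
        · have hMq2 : M q = M q.dropLast := by rw [hMq, sttStep_none hs]
          rw [hMq2]
          refine ⟨⟨hIH.1.1, hIH.1.2.1.trans (List.dropLast_prefix q), hIH.1.2.2⟩,
            hIH.2.1, hIH.2.2⟩
        · by_cases hT : q ∈ TargSet R A B (U j) (M q.dropLast).1
          · have hMq2 : M q = stab U q (j+1) := by rw [hMq, sttStep_some_pos hs hT]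
            have hfst : (M q).1 = q := by rw [hMq2, stab_fst]
            have hsecq : SecO (U j) q := hT.2.2.2
            have hsub : ∀ i, i ≤ j → ∃ t, t <+: q ∧ SecO (U i) t := by
              intro i hi
              rcases lt_or_eq_of_le hi with hi2 | hi2
              · obtain ⟨t, ht1, ht2⟩ := (hIH.2.1 j hs).2 i hi2
                exact ⟨t, ht1.trans (hIH.1.2.1.trans (List.dropLast_prefix q)), ht2⟩
              · exact ⟨q, List.prefix_refl _, hi2 ▸ hsecq⟩
            constructor
            · rw [hfst]
              exact ⟨hpq, List.prefix_refl _, hT.2.2.1⟩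
            constructor
            · intro j' hj'
              rw [hMq2] at hj'
              obtain ⟨h1, h2, h3⟩ := stab_some hj'
              rw [hfst]
              refine ⟨h2, fun i hi => ?_⟩
              rcases le_or_gt i j with hij | hij
              · exact hsub i hij
              · exact h3 i hij hi
            · intro hj'
              rw [hMq2] at hj'
              rw [hfst]
              intro i
              rcases le_or_gt i j with hij | hij
              · exact hsub i hij
              · exact stab_none hj' i hij
          · have hMq2 : M q = M q.dropLast := by rw [hMq, sttStep_some_neg hs hT]
            rw [hMq2]
            exact ⟨⟨hIH.1.1, hIH.1.2.1.trans (List.dropLast_prefix q), hIH.1.2.2⟩,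
              hIH.2.1, hIH.2.2⟩
  have hInv := fun q => hInvN q.length q rfl
  refine ⟨τ, ?_, ?_⟩
  · -- legality
    intro q hq hpq he
    have hI := hInv q hq hpq
    rcases hs : (M q).2 with _ | j
    · rw [hτnone q hs]
      exact hR.extMove_mem hq
    · rw [hτsome q j hs]
      have hcond : (M q).1 ∈ R ∧ ¬GoodAt R A B (M q).1 ∧
          ∀ t, t <+: (M q).1 → ¬SecO (U j) t :=
        ⟨hR.prefix_mem hq hI.1.2.1, hI.1.2.2, (hI.2.1 j hs).1⟩
      exact (hsig _ j hcond).1 q hq hI.1.2.1 he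
  · -- the play analysis
    intro x hx hseg hfol
    have hpfx : ∀ k, p₀.length ≤ k → p₀ <+: seg x k := by
      intro k hk
      rw [← hseg]
      exact seg_prefix_seg x hk
    have hInvk := fun k (hk : p₀.length ≤ k) => hInv (seg x k) (hx k) (hpfx k hk)
    have hmil : ∀ k (hk : p₀.length ≤ k), (M (seg x k)).1 <+: seg x k :=
      fun k hk => (hInvk k hk).1.2.1
    have hstep : ∀ k, p₀.length ≤ k →
        M (seg x (k+1)) = sttStep R A B U (M (seg x k)) (seg x (k+1)) := by
      intro k hk
      have h1 : M (seg x (k+1)) = stt R A B U p₀ (k+1) (seg x (k+1)) := by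
        rw [hM]; simp only []; rw [seg_length]
      have h2 : M (seg x k) = stt R A B U p₀ k (seg x k) := by
        rw [hM]; simp only []; rw [seg_length]
      rw [h1, h2, stt_succ (by omega) _, seg_dropLast]
    have hdich : ∀ k, p₀.length ≤ k → M (seg x (k+1)) = M (seg x k) ∨
        (∃ j, (M (seg x k)).2 = some j ∧
          seg x (k+1) ∈ TargSet R A B (U j) (M (seg x k)).1 ∧
          M (seg x (k+1)) = stab U (seg x (k+1)) (j+1)) := by
      intro k hk
      rcases h2 : (M (seg x k)).2 with _ | j
      · left; rw [hstep k hk, sttStep_none h2]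
      · by_cases hT : seg x (k+1) ∈ TargSet R A B (U j) (M (seg x k)).1
        · right; exact ⟨j, h2 ▸ rfl, hT, by rw [hstep k hk, sttStep_some_pos h2 hT]⟩
        · left; rw [hstep k hk, sttStep_some_neg h2 hT]
    have hmilmono : ∀ k, p₀.length ≤ k → (M (seg x k)).1 <+: (M (seg x (k+1))).1 := by
      intro k hk
      rcases hdich k hk with h | ⟨j, hj, hT, hnew⟩
      · rw [h]
      · have h1 : (M (seg x (k+1))).1 = seg x (k+1) := by rw [hnew, stab_fst]
        rw [h1]
        exact (hmil k hk).trans (seg_prefix_seg x (Nat.le_succ _))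
    by_cases hnone : ∃ k, p₀.length ≤ k ∧ (M (seg x k)).2 = none
    · -- a `none` state: every open set is secured, so x ∈ B ⊆ A
      obtain ⟨k, hk, hnk⟩ := hnone
      have h1 := (hInvk k hk).2.2 hnk
      have hxU : ∀ i, x ∈ U i := by
        intro i
        obtain ⟨t, ht, hsec⟩ := h1 i
        exact mem_of_sec hsec (ht.trans (hmil k hk))
      exact hBA (by rw [hBU]; exact Set.mem_iInter.mpr hxU)
    · push_neg at hnone
      have hjx0 : ∀ k, ∃ j, p₀.length ≤ k → (M (seg x k)).2 = some j := by
        intro k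
        by_cases hk : p₀.length ≤ k
        · rcases h : (M (seg x k)).2 with _ | j
          · exact absurd h (hnone k hk)
          · exact ⟨j, fun _ => h ▸ rfl⟩
        · exact ⟨0, fun hc => absurd hc hk⟩
      choose jx hjx using hjx0
      have hcstep : ∀ k, p₀.length ≤ k → jx k ≤ jx (k+1) ∧
          (jx (k+1) = jx k → M (seg x (k+1)) = M (seg x k)) := by
        intro k hk
        rcases hdich k hk with h | ⟨j, hj, hT, hnew⟩
        · have h1 : jx (k+1) = jx k := by
            have ha := hjx k hk
            have hb := hjx (k+1) (by omega)
            rw [h, ha] at hb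
            exact (Option.some_injective _ hb.symm)
          exact ⟨h1.ge, fun _ => h⟩
        · have hjk : j = jx k := by
            have ha := hjx k hk
            rw [hj] at ha
            exact Option.some_injective _ ha
          have hb := hjx (k+1) (by omega)
          rw [hnew] at hb
          obtain ⟨h3, _, _⟩ := stab_some hb
          exact ⟨by omega, fun hc => by omega⟩
      have hcmono : ∀ k, p₀.length ≤ k → ∀ k', k ≤ k' → jx k ≤ jx k' := by
        intro k hk k' hkk
        induction k', hkk using Nat.le_induction with
        | base => exact le_refl _
        | succ m hm IH2 => exact le_trans IH2 (hcstep m (le_trans hk hm)).1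
      by_cases hub : ∀ i, ∃ k, p₀.length ≤ k ∧ i < jx k
      · -- counters unbounded: again x ∈ B ⊆ A
        have hxU : ∀ i, x ∈ U i := by
          intro i
          obtain ⟨k, hk, hik⟩ := hub i
          obtain ⟨t, ht, hsec⟩ := ((hInvk k hk).2.1 (jx k) (hjx k hk)).2 i hik
          exact mem_of_sec hsec (ht.trans (hmil k hk))
        exact hBA (by rw [hBU]; exact Set.mem_iInter.mpr hxU)
      · -- counters bounded: state eventually constant, use the forcing strategy
        push_neg at hub
        obtain ⟨i₀, hi₀⟩ := hub
        have hJne : ({j | ∃ k, p₀.length ≤ k ∧ jx k = j} : Set ℕ).Nonempty :=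
          ⟨jx p₀.length, p₀.length, le_refl _, rfl⟩
        have hJbdd : BddAbove {j | ∃ k, p₀.length ≤ k ∧ jx k = j} := by
          refine ⟨i₀, fun j hj => ?_⟩
          obtain ⟨k, hk, hkj⟩ := hj
          rw [← hkj]
          exact hi₀ k hk
        obtain ⟨k₀, hk₀, hjk₀⟩ := Nat.sSup_mem hJne hJbdd
        have hjmaxle : ∀ k, p₀.length ≤ k → jx k ≤ jx k₀ := by
          intro k hk
          rw [hjk₀]
          exact le_csSup hJbdd ⟨k, hk, rfl⟩
        have hconst1 : ∀ k, k₀ ≤ k → M (seg x k) = M (seg x k₀) := by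
          intro k hk
          induction k, hk using Nat.le_induction with
          | base => rfl
          | succ m hm IH2 =>
            have hm0 : p₀.length ≤ m := le_trans hk₀ hm
            have ha : jx (m+1) ≤ jx m :=
              le_trans (hjmaxle (m+1) (by omega)) (hcmono k₀ hk₀ m hm)
            have h1 : jx (m+1) = jx m := le_antisymm ha (hcstep m hm0).1
            rw [(hcstep m hm0).2 h1, IH2]
        have hsome₀ : (M (seg x k₀)).2 = some (jx k₀) := hjx k₀ hk₀
        have hpr : p₀ <+: (M (seg x k₀)).1 := (hInvk k₀ hk₀).1.1
        have hrk₀ : (M (seg x k₀)).1 <+: seg x k₀ := hmil k₀ hk₀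
        have hrlen : (M (seg x k₀)).1.length ≤ k₀ := by
          have := hrk₀.length_le; rwa [seg_length] at this
        have hplen : p₀.length ≤ (M (seg x k₀)).1.length := hpr.length_le
        have hrseg : (M (seg x k₀)).1 = seg x (M (seg x k₀)).1.length := prefix_seg hrk₀
        have hkey : ∀ k, (M (seg x k₀)).1.length ≤ k → k < k₀ →
            M (seg x (k+1)) = M (seg x k) := by
          intro k hk1 hk2
          rcases hdich k (le_trans hplen hk1) with h | ⟨j, hj, hT, hnew⟩
          · exact h
          · exfalso
            have h1 : (M (seg x (k+1))).1 = seg x (k+1) := by rw [hnew, stab_fst]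
            have h2 : (M (seg x (k+1))).1 <+: (M (seg x k₀)).1 := by
              have h3 : ∀ m, k + 1 ≤ m → (M (seg x (k+1))).1 <+: (M (seg x m)).1 := by
                intro m hm
                induction m, hm using Nat.le_induction with
                | base => exact List.prefix_refl _
                | succ m' hm' IH2 =>
                  exact IH2.trans (hmilmono m' (by omega))
              exact h3 k₀ (by omega)
            rw [h1] at h2
            have := h2.length_le
            rw [seg_length] at this
            omega
        have hchain : ∀ k, (M (seg x k₀)).1.length ≤ k → k ≤ k₀ →
            M (seg x k) = M (seg x (M (seg x k₀)).1.length) := by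
          intro k hk1 hk2
          induction k, hk1 using Nat.le_induction with
          | base => rfl
          | succ m hm IH2 =>
            rw [hkey m hm (by omega), IH2 (by omega)]
        have hconst : ∀ k, (M (seg x k₀)).1.length ≤ k → M (seg x k) = M (seg x k₀) := by
          intro k hk
          rcases le_or_gt k₀ k with h | h
          · exact hconst1 k h
          · rw [hchain k hk h.le, ← hchain k₀ hrlen (le_refl _)]
        have hcond : (M (seg x k₀)).1 ∈ R ∧ ¬GoodAt R A B (M (seg x k₀)).1 ∧
            ∀ t, t <+: (M (seg x k₀)).1 → ¬SecO (U (jx k₀)) t :=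
          ⟨hR.prefix_mem (hx k₀) hrk₀, (hInvk k₀ hk₀).1.2.2,
            ((hInvk k₀ hk₀).2.1 (jx k₀) hsome₀).1⟩
        have hfolr : Follows (sig (M (seg x k₀)).1 (jx k₀)) (M (seg x k₀)).1.length x := by
          intro k hk hke
          have h1 := hfol k (le_trans hplen hk) hke
          have h2 : (M (seg x k)).2 = some (jx k₀) := by rw [hconst k hk]; exact hsome₀
          have h3 : (M (seg x k)).1 = (M (seg x k₀)).1 := by rw [hconst k hk]
          rw [h1, hτsome (seg x k) (jx k₀) h2, h3]
        have hwin := (hsig (M (seg x k₀)).1 (jx k₀) hcond).2 x hx hrseg.symm hfolr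
        rcases hwin with h | ⟨k, hk1, hk2⟩
        · exact h
        · exfalso
          have hk0 : (M (seg x k₀)).1.length ≤ k - 1 := by omega
          have hstate : M (seg x (k-1)) = M (seg x k₀) := hconst (k-1) hk0
          have h2 : (M (seg x (k-1))).2 = some (jx k₀) := by rw [hstate]; exact hsome₀
          have h3 : seg x k ∈ TargSet R A B (U (jx k₀)) (M (seg x (k-1))).1 := by
            rw [hstate]; exact hk2
          have h4 : M (seg x k) = stab U (seg x k) (jx k₀ + 1) := by
            have h5 := hstep (k-1) (le_trans hplen hk0)
            rw [show k - 1 + 1 = k by omega] at h5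
            rw [h5, sttStep_some_pos h2 h3]
          have h6 : (M (seg x k)).1 = seg x k := by rw [h4, stab_fst]
          have h7 : (M (seg x k)).1 = (M (seg x k₀)).1 := by rw [hconst k (by omega)]
          rw [h6] at h7
          have h8 := congrArg List.length h7
          rw [seg_length] at h8
          omega

end Lemma31


section Final

lemma lemma31plus {R : Set (List ℕ)} {A B : Set (ℕ → ℕ)} (hR : IsGameTree R)
    {U : ℕ → Set (ℕ → ℕ)} (hU : ∀ m, IsOpen (U m)) (hBU : B = ⋂ m, U m) (hBA : B ⊆ A)
    {p₀ : List ℕ} (hp₀ : p₀ ∈ R) (hNG : ¬WinFrom R A p₀) :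
    ∃ S, GoodSub R S p₀ ∧ body S ∩ B = ∅ ∧ ∀ q ∈ S, p₀ <+: q → ¬WinFrom S A q := by
  obtain ⟨_, S₁, hS₁, hS₁B, hS₁ng⟩ := lemma31 hR hU hBU hBA hp₀ hNG
  obtain ⟨W, hGW, _, hWng⟩ := exists_nonlosing hS₁.isGameTree hS₁.1 hS₁ng
  refine ⟨W, GoodSub.trans hS₁ hGW (List.prefix_refl _), ?_, hWng⟩
  have h1 : body W ⊆ body S₁ := body_mono hGW.subset
  rw [Set.eq_empty_iff_forall_notMem] at hS₁B ⊢
  exact fun x hx => hS₁B x ⟨h1 hx.1, hx.2⟩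

lemma nextQ_exists (A An : Set (ℕ → ℕ)) (Q : Set (List ℕ)) (p : List ℕ) :
    ∃ S : Set (List ℕ),
      (IsGameTree Q ∧ p ∈ Q ∧ ¬WinFrom Q A p ∧ An ⊆ A ∧
        (∃ U : ℕ → Set (ℕ → ℕ), (∀ m, IsOpen (U m)) ∧ An = ⋂ m, U m)) →
      (GoodSub Q S p ∧ body S ∩ An = ∅ ∧ ∀ q ∈ S, p <+: q → ¬WinFrom S A q) := by
  by_cases h : IsGameTree Q ∧ p ∈ Q ∧ ¬WinFrom Q A p ∧ An ⊆ A ∧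
      (∃ U : ℕ → Set (ℕ → ℕ), (∀ m, IsOpen (U m)) ∧ An = ⋂ m, U m)
  · obtain ⟨hQ, hp, hNG, hsub, U, hU, hAn⟩ := h
    obtain ⟨S, h1⟩ := lemma31plus hQ hU hAn hsub hp hNG
    exact ⟨S, fun _ => h1⟩
  · exact ⟨Q, fun hc => absurd hc h⟩

noncomputable def NextQ (A An : Set (ℕ → ℕ)) (Q : Set (List ℕ)) (p : List ℕ) :
    Set (List ℕ) :=
  (nextQ_exists A An Q p).choose

lemma NextQ_spec {A An : Set (ℕ → ℕ)} {Q : Set (List ℕ)} {p : List ℕ}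
    (h : IsGameTree Q ∧ p ∈ Q ∧ ¬WinFrom Q A p ∧ An ⊆ A ∧
      (∃ U : ℕ → Set (ℕ → ℕ), (∀ m, IsOpen (U m)) ∧ An = ⋂ m, U m)) :
    GoodSub Q (NextQ A An Q p) p ∧ body (NextQ A An Q p) ∩ An = ∅ ∧
      ∀ q ∈ NextQ A An Q p, p <+: q → ¬WinFrom (NextQ A An Q p) A q :=
  (nextQ_exists A An Q p).choose_spec h

/-- The scene recursion: the quasi-strategy and counter after an even number of moves. -/
noncomputable def sceneGo (A : Set (ℕ → ℕ)) (An : ℕ → Set (ℕ → ℕ))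
    (Q0 : Set (List ℕ)) : ℕ → List ℕ → Set (List ℕ) × ℕ
  | 0, _ => (Q0, 0)
  | 1, _ => (Q0, 0)
  | (k+2), q =>
      (NextQ A (An (sceneGo A An Q0 k q.dropLast.dropLast).2)
        (sceneGo A An Q0 k q.dropLast.dropLast).1 q.dropLast,
       (sceneGo A An Q0 k q.dropLast.dropLast).2 + 1)

lemma sceneGo_eq2 (A : Set (ℕ → ℕ)) (An : ℕ → Set (ℕ → ℕ)) (Q0 : Set (List ℕ))
    (k : ℕ) (q : List ℕ) :
    sceneGo A An Q0 (k+2) q =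
      (NextQ A (An (sceneGo A An Q0 k q.dropLast.dropLast).2)
        (sceneGo A An Q0 k q.dropLast.dropLast).1 q.dropLast,
       (sceneGo A An Q0 k q.dropLast.dropLast).2 + 1) := rfl

end Final

/-- The substantive half of the paper's Theorem 30: for a `Σ⁰₃` payoff set
`A = ⋃ₙ Aₙ` with each `Aₙ` a `Gδ` subset of Baire space, if player I has no
winning strategy in `G(A ∩ [T]; T)` then player II has one. -/
theorem II_wins_of_I_does_not (T : Set (List ℕ)) (hT : IsGameTree T)
    (A : Set (ℕ → ℕ)) (An : ℕ → Set (ℕ → ℕ))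
    (hGδ : ∀ n, IsGδ (An n)) (hA : A = ⋃ n, An n)
    (hI : ¬ ∃ σ, WinStratI T (A ∩ body T) σ) :
    ∃ σ, WinStratII T (A ∩ body T) σ := by
  classical
  have hNG : ¬WinFrom T A [] := by
    rintro ⟨σ, h1, h2⟩
    refine hI ⟨σ, fun p hp he => h1 p hp (List.nil_prefix) he, fun x hx hc => ?_⟩
    exact ⟨h2 x hx rfl (fun k _ hke => hc k hke), hx⟩
  have h0T : ([] : List ℕ) ∈ T := by
    obtain ⟨q, hq⟩ := hT.1
    exact hT.prefix_mem hq (List.nil_prefix)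
  obtain ⟨Q0, hGQ0, _, hQ0ng⟩ := exists_nonlosing hT h0T hNG
  have hAnA : ∀ n, An n ⊆ A := by
    intro n
    rw [hA]
    exact Set.subset_iUnion An n
  have hGδ' : ∀ n, ∃ U : ℕ → Set (ℕ → ℕ), (∀ m, IsOpen (U m)) ∧ An n = ⋂ m, U m :=
    fun n => isGδ_iff_eq_iInter_nat.mp (hGδ n)
  set τ : List ℕ → ℕ := fun p =>
    if p ++ [extMove (NextQ A (An (sceneGo A An Q0 p.dropLast.length p.dropLast).2)
        (sceneGo A An Q0 p.dropLast.length p.dropLast).1 p) p] ∈ T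
    then extMove (NextQ A (An (sceneGo A An Q0 p.dropLast.length p.dropLast).2)
        (sceneGo A An Q0 p.dropLast.length p.dropLast).1 p) p
    else extMove T p
    with hτ
  have hτleg : ∀ p ∈ T, p ++ [τ p] ∈ T := by
    intro p hp
    rw [hτ]
    simp only []
    split
    case isTrue h => exact h
    case isFalse h => exact hT.extMove_mem hp
  refine ⟨τ, fun p hp _ => hτleg p hp, ?_⟩
  intro x hx hcons
  rintro ⟨hxA, -⟩
  have hIeven : ∀ j : ℕ, Even (seg x (2*j)).length := by
    intro j; rw [seg_length]; exact even_two_mul j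
  have hseg21 : ∀ j : ℕ, seg x (2*j+1) = seg x (2*j) ++ [x (2*j)] := fun j => seg_succ x _
  have hoddj : ∀ j : ℕ, ¬Even (2*j+1) := by
    intro j
    simp [Nat.even_add_one, even_two_mul]
  -- single step of the scene recursion
  have hstep : ∀ j : ℕ,
      ((sceneGo A An Q0 (2*j) (seg x (2*j))).2 = j ∧
        IsGameTree (sceneGo A An Q0 (2*j) (seg x (2*j))).1 ∧
        (sceneGo A An Q0 (2*j) (seg x (2*j))).1 ⊆ T ∧
        seg x (2*j) ∈ (sceneGo A An Q0 (2*j) (seg x (2*j))).1 ∧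
        (∃ b, b <+: seg x (2*j) ∧ GoodSub T (sceneGo A An Q0 (2*j) (seg x (2*j))).1 b ∧
          ∀ q ∈ (sceneGo A An Q0 (2*j) (seg x (2*j))).1, b <+: q →
            ¬WinFrom (sceneGo A An Q0 (2*j) (seg x (2*j))).1 A q)) →
      (((sceneGo A An Q0 (2*(j+1)) (seg x (2*(j+1)))).2 = j+1 ∧
        IsGameTree (sceneGo A An Q0 (2*(j+1)) (seg x (2*(j+1)))).1 ∧
        (sceneGo A An Q0 (2*(j+1)) (seg x (2*(j+1)))).1 ⊆ T ∧
        seg x (2*(j+1)) ∈ (sceneGo A An Q0 (2*(j+1)) (seg x (2*(j+1)))).1 ∧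
        (∃ b, b <+: seg x (2*(j+1)) ∧
          GoodSub T (sceneGo A An Q0 (2*(j+1)) (seg x (2*(j+1)))).1 b ∧
          ∀ q ∈ (sceneGo A An Q0 (2*(j+1)) (seg x (2*(j+1)))).1, b <+: q →
            ¬WinFrom (sceneGo A An Q0 (2*(j+1)) (seg x (2*(j+1)))).1 A q)) ∧
       (sceneGo A An Q0 (2*(j+1)) (seg x (2*(j+1)))).1 ⊆
         (sceneGo A An Q0 (2*j) (seg x (2*j))).1 ∧
       body (sceneGo A An Q0 (2*(j+1)) (seg x (2*(j+1)))).1 ∩ An j = ∅) := by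
    rintro j ⟨hn, hQtree, hQT, hQmem, b, hb, hGS, hNGq⟩
    have hpT : seg x (2*j+1) ∈ T := hx _
    have hpQ : seg x (2*j+1) ∈ (sceneGo A An Q0 (2*j) (seg x (2*j))).1 := by
      rw [hseg21 j]
      exact hGS.2.2.2.2.2 _ hQmem hb (hIeven j) _ (by rw [← hseg21 j]; exact hpT)
    have hbp : b <+: seg x (2*j+1) := hb.trans (by rw [hseg21 j]; exact ⟨[x (2*j)], rfl⟩)
    have hNGp : ¬WinFrom (sceneGo A An Q0 (2*j) (seg x (2*j))).1 A (seg x (2*j+1)) :=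
      hNGq _ hpQ hbp
    have hcond : IsGameTree (sceneGo A An Q0 (2*j) (seg x (2*j))).1 ∧
        seg x (2*j+1) ∈ (sceneGo A An Q0 (2*j) (seg x (2*j))).1 ∧
        ¬WinFrom (sceneGo A An Q0 (2*j) (seg x (2*j))).1 A (seg x (2*j+1)) ∧
        An j ⊆ A ∧ (∃ U : ℕ → Set (ℕ → ℕ), (∀ m, IsOpen (U m)) ∧ An j = ⋂ m, U m) :=
      ⟨hQtree, hpQ, hNGp, hAnA j, hGδ' j⟩
    obtain ⟨hGS', hbody', hNG'⟩ := NextQ_spec hcond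
    have hc' : seg x (2*j+1) ++
        [extMove (NextQ A (An j) (sceneGo A An Q0 (2*j) (seg x (2*j))).1 (seg x (2*j+1)))
          (seg x (2*j+1))] ∈
        NextQ A (An j) (sceneGo A An Q0 (2*j) (seg x (2*j))).1 (seg x (2*j+1)) :=
      extMove_mem (hGS'.isGameTree.2.2 _ hGS'.1)
    have hcT : seg x (2*j+1) ++
        [extMove (NextQ A (An j) (sceneGo A An Q0 (2*j) (seg x (2*j))).1 (seg x (2*j+1)))
          (seg x (2*j+1))] ∈ T := hQT (hGS'.subset hc')
    -- τ plays the scripted move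
    have hdl : (seg x (2*j+1)).dropLast = seg x (2*j) := seg_dropLast x _
    have hdll : (seg x (2*j+1)).dropLast.length = 2*j := by rw [hdl, seg_length]
    have hτp : τ (seg x (2*j+1)) =
        extMove (NextQ A (An j) (sceneGo A An Q0 (2*j) (seg x (2*j))).1 (seg x (2*j+1)))
          (seg x (2*j+1)) := by
      rw [hτ]
      simp only []
      rw [hdll, hdl, hn]
      rw [if_pos hcT]
    have hmove : x (2*j+1) =
        extMove (NextQ A (An j) (sceneGo A An Q0 (2*j) (seg x (2*j))).1 (seg x (2*j+1)))
          (seg x (2*j+1)) := by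
      rw [hcons (2*j+1) (hoddj j), hτp]
    have hseg22 : seg x (2*(j+1)) = seg x (2*j+1) ++
        [extMove (NextQ A (An j) (sceneGo A An Q0 (2*j) (seg x (2*j))).1 (seg x (2*j+1)))
          (seg x (2*j+1))] := by
      rw [show 2*(j+1) = (2*j+1)+1 by ring, seg_succ, hmove]
    have hunfold : sceneGo A An Q0 (2*(j+1)) (seg x (2*(j+1))) =
        (NextQ A (An j) (sceneGo A An Q0 (2*j) (seg x (2*j))).1 (seg x (2*j+1)), j+1) := by
      rw [show 2*(j+1) = 2*j+2 by ring]
      rw [sceneGo_eq2]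
      have hd1 : (seg x (2*j+2)).dropLast = seg x (2*j+1) := seg_dropLast x _
      rw [hd1, hdl, hn]
    have hmem22 : seg x (2*(j+1)) ∈
        NextQ A (An j) (sceneGo A An Q0 (2*j) (seg x (2*j))).1 (seg x (2*j+1)) := by
      rw [hseg22]; exact hc'
    rw [hunfold]
    refine ⟨⟨rfl, hGS'.isGameTree, fun q hq => hQT (hGS'.subset hq), hmem22,
      ⟨seg x (2*j+1), ?_, ?_, hNG'⟩⟩, hGS'.subset, hbody'⟩
    · rw [hseg22]; exact ⟨_, rfl⟩
    · exact GoodSub.trans hGS hGS' hbp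
  -- the invariant holds for all j
  have hInvAll : ∀ j : ℕ, (sceneGo A An Q0 (2*j) (seg x (2*j))).2 = j ∧
      IsGameTree (sceneGo A An Q0 (2*j) (seg x (2*j))).1 ∧
      (sceneGo A An Q0 (2*j) (seg x (2*j))).1 ⊆ T ∧
      seg x (2*j) ∈ (sceneGo A An Q0 (2*j) (seg x (2*j))).1 ∧
      (∃ b, b <+: seg x (2*j) ∧ GoodSub T (sceneGo A An Q0 (2*j) (seg x (2*j))).1 b ∧
        ∀ q ∈ (sceneGo A An Q0 (2*j) (seg x (2*j))).1, b <+: q →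
          ¬WinFrom (sceneGo A An Q0 (2*j) (seg x (2*j))).1 A q) := by
    intro j
    induction j with
    | zero =>
      refine ⟨rfl, hGQ0.isGameTree, hGQ0.subset, hGQ0.1, [], List.nil_prefix, hGQ0, ?_⟩
      intro q hq _
      exact hQ0ng q hq (List.nil_prefix)
    | succ m IH => exact (hstep m IH).1
  -- the play stays inside every scene tree
  have hoddmem : ∀ m : ℕ, seg x (2*m+1) ∈ (sceneGo A An Q0 (2*m) (seg x (2*m))).1 := by
    intro m
    obtain ⟨hn, hQtree, hQT, hQmem, b, hb, hGS, hNGq⟩ := hInvAll m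
    rw [hseg21 m]
    exact hGS.2.2.2.2.2 _ hQmem hb (hIeven m) _ (by rw [← hseg21 m]; exact hx _)
  have hchain : ∀ j i : ℕ, j ≤ i → (sceneGo A An Q0 (2*i) (seg x (2*i))).1 ⊆
      (sceneGo A An Q0 (2*j) (seg x (2*j))).1 := by
    intro j i hji
    induction i, hji using Nat.le_induction with
    | base => exact subset_rfl
    | succ m hm IH2 => exact subset_trans (hstep m (hInvAll m)).2.1 IH2
  have hbodyx : ∀ j : ℕ, x ∈ body (sceneGo A An Q0 (2*(j+1)) (seg x (2*(j+1)))).1 := by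
    intro j k
    rcases le_or_gt k (2*(j+1)) with h | h
    · obtain ⟨b, _, hGS, _⟩ := (hInvAll (j+1)).2.2.2.2
      exact hGS.2.2.1 _ (hInvAll (j+1)).2.2.2.1 _ (seg_prefix_seg x h)
    · rcases Nat.even_or_odd k with he | ho
      · obtain ⟨m, hm⟩ := he
        have hkm : k = 2*m := by omega
        have hk2 : seg x k ∈ (sceneGo A An Q0 (2*m) (seg x (2*m))).1 := by
          rw [hkm]; exact (hInvAll m).2.2.2.1
        exact hchain (j+1) m (by omega) hk2
      · obtain ⟨m, hm⟩ := ho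
        have hk2 : seg x k ∈ (sceneGo A An Q0 (2*m) (seg x (2*m))).1 := by
          rw [hm]; exact hoddmem m
        exact hchain (j+1) m (by omega) hk2
  have hnotAn : ∀ j, x ∉ An j := by
    intro j hxAn
    have h2 := (hstep j (hInvAll j)).2.2
    rw [Set.eq_empty_iff_forall_notMem] at h2
    exact h2 x ⟨hbodyx j, hxAn⟩
  rw [hA, Set.mem_iUnion] at hxA
  obtain ⟨j, hj⟩ := hxA
  exact hnotAn j hj
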